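/- Let X be a diffeological space. If X is D-Hausdorff and D-paracompact, then X is D-normal. -/

import Mathlib

open Set Function ContDiff
open scoped Classical

noncomputable section

/-- Euclidean space `ℝⁿ`. -/
abbrev Euc (n : ℕ) : Type := EuclideanSpace ℝ (Fin n)

/-- A diffeology on a set `X`: a family of parametrizations (maps from open subsets of
Euclidean spaces into `X`), called plots, satisfying the covering, locality and smooth
compatibility axioms. -/
structure Diffeology (X : Type*) where
  /-- `IsPlot U P` means that the parametrization `P : U → X` is a plot. -/
  IsPlotD : ∀ {n : ℕ} (U : Set (Euc n)), (U → X) → Prop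
  /-- Plots are defined on open subsets of Euclidean spaces. -/
  isOpen_dom : ∀ {n : ℕ} {U : Set (Euc n)} {P : U → X}, IsPlotD U P → IsOpen U
  /-- Every constant parametrization is a plot. -/
  const_plot : ∀ {n : ℕ} {U : Set (Euc n)}, IsOpen U → ∀ x : X, IsPlotD U fun _ => x
  /-- A parametrization is a plot as soon as it is locally a plot. -/
  locality : ∀ {n : ℕ} {U : Set (Euc n)} {P : U → X}, IsOpen U →
    (∀ u : U, ∃ (W : Set (Euc n)) (hWU : W ⊆ U), IsOpen W ∧ (u : Euc n) ∈ W ∧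
      IsPlotD W fun w => P ⟨w.1, hWU w.2⟩) → IsPlotD U P
  /-- The composite of a plot with a smooth map between open subsets of Euclidean
  spaces is a plot. -/
  smooth_comp : ∀ {n m : ℕ} {U : Set (Euc n)} {P : U → X} {V : Set (Euc m)}
    {F : Euc m → Euc n}, IsPlotD U P → IsOpen V → ContDiffOn ℝ ∞ F V →
    ∀ hFV : MapsTo F V U, IsPlotD V fun v => P ⟨F v.1, hFV v.2⟩

namespace Diffeology

variable {X Y : Type*} (D : Diffeology X)

/-- A subset `A` of a diffeological space is `D`-open if its preimage under every
plot is open. -/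
def IsDOpen (A : Set X) : Prop :=
  ∀ {n : ℕ} {U : Set (Euc n)} {P : U → X}, D.IsPlotD U P → IsOpen (P ⁻¹' A)

/-- A subset `A` of a diffeological space is `D`-closed if its preimage under every
plot is closed. -/
def IsDClosed (A : Set X) : Prop :=
  ∀ {n : ℕ} {U : Set (Euc n)} {P : U → X}, D.IsPlotD U P → IsClosed (P ⁻¹' A)

/-- The `D`-closure of a set: the smallest `D`-closed set containing it. -/
def dClosure (A : Set X) : Set X := ⋂₀ {C : Set X | D.IsDClosed C ∧ A ⊆ C}

/-- The sub-diffeology on a subset `A ⊆ X`: plots are the parametrizations into `A`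
that are plots of `X`. -/
def sub (A : Set X) : Diffeology A where
  IsPlotD U P := D.IsPlotD U fun u => (P u : X)
  isOpen_dom h := D.isOpen_dom h
  const_plot hU a := D.const_plot hU (a : X)
  locality hU h := D.locality hU fun u => by
    obtain ⟨W, hWU, hW, huW, hP⟩ := h u
    exact ⟨W, hWU, hW, huW, hP⟩
  smooth_comp h hV hF hFV := D.smooth_comp h hV hF hFV

/-- A diffeological space is `D`-Hausdorff if any two distinct points admit disjoint
`D`-open neighbourhoods. -/
def IsDHausdorff : Prop :=
  ∀ x y : X, x ≠ y → ∃ Ux Uy : Set X,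
    D.IsDOpen Ux ∧ D.IsDOpen Uy ∧ x ∈ Ux ∧ y ∈ Uy ∧ Ux ∩ Uy = ∅

/-- A subset `C` of a diffeological space `X` is `D`-compact in `X` if every cover of
`C` by `D`-open sets of `X` has a finite subcover. -/
def IsDCompactIn (C : Set X) : Prop :=
  ∀ S : Set (Set X), (∀ s ∈ S, D.IsDOpen s) → C ⊆ ⋃₀ S →
    ∃ T ⊆ S, T.Finite ∧ C ⊆ ⋃₀ T

/-- A collection of subsets of a diffeological space is locally finite if every point
has a `D`-open neighbourhood meeting only finitely many members of the collection. -/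
def LocallyFiniteFam {ι : Type*} (W : ι → Set X) : Prop :=
  ∀ x : X, ∃ V : Set X, D.IsDOpen V ∧ x ∈ V ∧ {i : ι | (W i ∩ V).Nonempty}.Finite

/-- A set of subsets of a diffeological space is locally finite if every point has a
`D`-open neighbourhood meeting only finitely many members. -/
def LocallyFiniteSet (S : Set (Set X)) : Prop :=
  ∀ x : X, ∃ V : Set X, D.IsDOpen V ∧ x ∈ V ∧ {s ∈ S | (s ∩ V).Nonempty}.Finite

/-- A subset `A` is `D`-paracompact in `X` if every cover of `A` by `D`-open sets of
`X` has a locally finite refinement by `D`-open sets of `X` (covering `A`). -/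
def IsDParacompactIn (A : Set X) : Prop :=
  ∀ S : Set (Set X), (∀ s ∈ S, D.IsDOpen s) → A ⊆ ⋃₀ S →
    ∃ R : Set (Set X), (∀ r ∈ R, D.IsDOpen r) ∧ (∀ r ∈ R, ∃ s ∈ S, r ⊆ s) ∧
      A ⊆ ⋃₀ R ∧ D.LocallyFiniteSet R

/-- A diffeological space is `D`-paracompact if it is `D`-paracompact in itself. -/
def IsDParacompact : Prop := D.IsDParacompactIn univ

/-- A diffeological space is `D`-compact if it is `D`-compact in itself. -/
def IsDCompact : Prop := D.IsDCompactIn univ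

/-- A diffeological space is `D`-normal if disjoint `D`-closed sets can be separated
by disjoint `D`-open sets. -/
def IsDNormal : Prop :=
  ∀ A B : Set X, D.IsDClosed A → D.IsDClosed B → A ∩ B = ∅ →
    ∃ UA UB : Set X, D.IsDOpen UA ∧ D.IsDOpen UB ∧ A ⊆ UA ∧ B ⊆ UB ∧ UA ∩ UB = ∅

end Diffeology

/-- A map between diffeological spaces is smooth if it sends plots to plots. -/
def DSmooth {X Y : Type*} (DX : Diffeology X) (DY : Diffeology Y) (f : X → Y) : Prop :=
  ∀ {n : ℕ} {U : Set (Euc n)} {P : U → X}, DX.IsPlotD U P → DY.IsPlotD U (f ∘ P)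

/-!
The `D`-open sets of a diffeological space form a topology, the `D`-topology, in which
`D`-Hausdorff, `D`-paracompact, `D`-closed and `D`-normal become the usual topological
notions. Normality then follows from the classical theorem that a paracompact Hausdorff
space is normal.
-/

open Topology

namespace Diffeology

variable {X : Type*} (D : Diffeology X)

@[reducible] def dTop : TopologicalSpace X where
  IsOpen := D.IsDOpen
  isOpen_univ _ := by simp
  isOpen_inter _ _ hs ht _ _ _ hP := by
    rw [preimage_inter]
    exact (hs hP).inter (ht hP)
  isOpen_sUnion _ hS _ _ _ hP := by
    rw [preimage_sUnion]
    exact isOpen_biUnion fun s hs => hS s hs hP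

theorem isOpen_dTop_iff {A : Set X} : IsOpen[D.dTop] A ↔ D.IsDOpen A := Iff.rfl

theorem isClosed_dTop_iff {A : Set X} : IsClosed[D.dTop] A ↔ D.IsDClosed A := by
  let := D.dTop
  rw [← isOpen_compl_iff, isOpen_dTop_iff]
  refine forall₃_congr fun _ _ P => forall_congr' fun _ => ?_
  rw [preimage_compl, isOpen_compl_iff]

theorem t2Space_dTop (hH : D.IsDHausdorff) : @T2Space X D.dTop :=
  @T2Space.mk X D.dTop fun x y hxy => by
    obtain ⟨Ux, Uy, hUx, hUy, hx, hy, hdisj⟩ := hH x y hxy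
    exact ⟨Ux, Uy, hUx, hUy, hx, hy, disjoint_iff_inter_eq_empty.2 hdisj⟩

theorem LocallyFiniteSet.locallyFinite {D : Diffeology X} {R : Set (Set X)}
    (hR : D.LocallyFiniteSet R) : @LocallyFinite R X D.dTop (↑) := by
  intro x
  obtain ⟨V, hV, hxV, hfin⟩ := hR x
  refine ⟨V, @IsOpen.mem_nhds X D.dTop _ _ hV hxV, ?_⟩
  exact (hfin.preimage Subtype.val_injective.injOn).subset fun r hr => ⟨r.2, hr⟩

theorem paracompactSpace_dTop (hP : D.IsDParacompact) : @ParacompactSpace X D.dTop := by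
  let := D.dTop
  refine ⟨fun ι u hu hcover => ?_⟩
  obtain ⟨R, hRopen, hRrefines, hRcover, hRlf⟩ :=
    hP (range u) (forall_mem_range.2 hu) (by rw [sUnion_range, hcover])
  refine ⟨R, (↑), fun r => hRopen r r.2, ?_, hRlf.locallyFinite, fun r => ?_⟩
  · rw [← sUnion_eq_iUnion]
    exact univ_subset_iff.1 hRcover
  · obtain ⟨_, ⟨i, rfl⟩, hri⟩ := hRrefines r r.2
    exact ⟨i, hri⟩

end Diffeology

/-- A `D`-Hausdorff and `D`-paracompact diffeological space is `D`-normal. -/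
theorem isDNormal_of_isDHausdorff_of_isDParacompact {X : Type*} (D : Diffeology X)
    (hH : D.IsDHausdorff) (hP : D.IsDParacompact) : D.IsDNormal := by
  let := D.dTop
  have := D.t2Space_dTop hH
  have := D.paracompactSpace_dTop hP
  intro A B hA hB hAB
  obtain ⟨UA, UB, hUA, hUB, hAUA, hBUB, hdisj⟩ :=
    normal_separation (D.isClosed_dTop_iff.2 hA) (D.isClosed_dTop_iff.2 hB)
      (disjoint_iff_inter_eq_empty.2 hAB)
  exact ⟨UA, UB, hUA, hUB, hAUA, hBUB, disjoint_iff_inter_eq_empty.1 hdisj⟩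

end
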